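/- Let d ≥ 1, m = 2d, and r, t ∈ ℂ with t ≠ 0 satisfy the unitarity constraints |r|² + (m−1)|t|² = 1 and (m−2)|t|² + conj(r)·t + r·conj(t) = 0. Then the dispersion 𝒟(n) = K·Σ_{a∈(Fin m)^n} ‖e(a_1)+⋯+e(a_n)‖²·|Ξ(a)|² of the quantum walk with random phase shifts equals the dispersion of the memoryless classical random walk, i.e. 𝒟(n) = n for all n ≥ 1, if and only if |r| = |t|. -/

import Mathlib

noncomputable section

open scoped BigOperators ComplexConjugate RealInnerProductSpace

/-- `Ξ(a_1, …, a_n) = ∏_{j=1}^{n-1} (t + (r - t) δ_{a_j, a_{j+1}})` (empty product is 1). -/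
def Xi (m n : ℕ) (r t : ℂ) (a : Fin n → Fin m) : ℂ :=
  ∏ j : Fin n, if h : (j : ℕ) + 1 < n then
    (t + (r - t) * (if a j = a ⟨(j : ℕ) + 1, h⟩ then 1 else 0)) else 1

/-- The `2d` signed standard basis vectors of `ℝ^d`: `e(2k) = u_k`, `e(2k+1) = -u_k`. -/
def eR (d : ℕ) (a : Fin (2 * d)) : EuclideanSpace ℝ (Fin d) :=
  EuclideanSpace.single ⟨(a : ℕ) / 2, by have := a.2; omega⟩
    (if (a : ℕ) % 2 = 0 then 1 else -1)

/-- The normalization constant `K = |(r-t)/√m + √m t|²` with `m = 2d`. -/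
def K (d : ℕ) (r t : ℂ) : ℝ :=
  ‖(r - t) / (Real.sqrt (2 * d) : ℂ) + (Real.sqrt (2 * d) : ℂ) * t‖ ^ 2

/-- The dispersion `𝒟(n) = K Σ_a ‖e(a_1)+⋯+e(a_n)‖² |Ξ(a)|²` of the phase-averaged
quantum walk with random phase shifts. -/
def Dsp (d : ℕ) (r t : ℂ) (n : ℕ) : ℝ :=
  K d r t * ∑ a : Fin n → Fin (2 * d),
    ‖∑ j : Fin n, eR d (a j)‖ ^ 2 * ‖Xi (2 * d) n r t a‖ ^ 2

/-- The auxiliary sum `R(n) = Σ_a |Ξ(a)|² ⟨e(a_1)+⋯+e(a_n), e(a_n)⟩`. -/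
def Rsum (d : ℕ) (r t : ℂ) (n : ℕ) : ℝ :=
  if hn : 0 < n then
    ∑ a : Fin n → Fin (2 * d), ‖Xi (2 * d) n r t a‖ ^ 2 *
      ⟪(∑ j : Fin n, eR d (a j)), eR d (a ⟨n - 1, by omega⟩)⟫
  else 0

/-!
The weights `|Ξ(a)|²` are the path weights of a persistent classical walk: a step repeats the
previous one with weight `|r|²` and goes in each of the other `m - 1` directions with weight `|t|²`.
The first unitarity constraint says exactly that these weights sum to `1`, so walks of any length
`n ≥ 1` have total weight `m`. Since the `m = 2d` steps sum to zero, the weighted mean of the next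
step is `|r|² - |t|²` times the previous one, so a step adds `1 + 2 (|r|² - |t|²) ⟨position, last
step⟩` to the second moment. For `|r| = |t|` the correlation term drops out and the weighted
second moment after `n` steps is `n m`; after two steps the correlation term is `m`, which forces
`|r| = |t|`. The second unitarity constraint makes `K = 1 / m`.
-/

open Finset

section Xi

variable {m : ℕ} (r t : ℂ)

lemma Xi_succ {n : ℕ} (a : Fin (n + 1) → Fin m) :
    Xi m (n + 1) r t a =
      ∏ j : Fin n, (t + (r - t) * if a j.castSucc = a j.succ then 1 else 0) := by
  rw [Xi, Fin.prod_univ_castSucc, dif_neg (by simp), mul_one]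
  exact prod_congr rfl fun j _ => dif_pos (by simp)

lemma Xi_one (a : Fin 1 → Fin m) : Xi m 1 r t a = 1 := by
  simp [Xi]

lemma Xi_snoc {n : ℕ} (a : Fin (n + 1) → Fin m) (b : Fin m) :
    Xi m (n + 2) r t (Fin.snoc a b) =
      Xi m (n + 1) r t a * (t + (r - t) * if a (Fin.last n) = b then 1 else 0) := by
  rw [Xi_succ, Xi_succ, Fin.prod_univ_castSucc, Fin.succ_last, Fin.snoc_last,
    Fin.snoc_castSucc]
  congr 1
  refine prod_congr rfl fun j _ => ?_
  rw [Fin.snoc_castSucc, Fin.succ_castSucc, Fin.snoc_castSucc]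

def transitionWeight (x b : Fin m) : ℝ :=
  if x = b then ‖r‖ ^ 2 else ‖t‖ ^ 2

lemma norm_Xi_snoc_sq {n : ℕ} (a : Fin (n + 1) → Fin m) (b : Fin m) :
    ‖Xi m (n + 2) r t (Fin.snoc a b)‖ ^ 2 =
      ‖Xi m (n + 1) r t a‖ ^ 2 * transitionWeight r t (a (Fin.last n)) b := by
  rw [Xi_snoc, norm_mul, mul_pow, transitionWeight]
  split_ifs <;> simp

end Xi

lemma sum_fin_succ_fun {α β : Type*} [Fintype α] [DecidableEq α] [AddCommMonoid β] {n : ℕ}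
    (F : (Fin (n + 1) → α) → β) :
    ∑ a, F a = ∑ a : Fin n → α, ∑ b, F (Fin.snoc a b) := by
  rw [← (Fin.snocEquiv fun _ => α).sum_comp, Fintype.sum_prod_type, sum_comm]
  rfl

section Walk

variable {m : ℕ} {r t : ℂ}

lemma sum_transitionWeight (h1 : ‖r‖ ^ 2 + ((m : ℝ) - 1) * ‖t‖ ^ 2 = 1) (x : Fin m) :
    ∑ b, transitionWeight r t x b = 1 := by
  have split : ∀ b, transitionWeight r t x b =
      (if x = b then ‖r‖ ^ 2 - ‖t‖ ^ 2 else 0) + ‖t‖ ^ 2 := by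
    intro b; unfold transitionWeight; split_ifs <;> ring
  simp only [split, sum_add_distrib, sum_ite_eq, mem_univ, if_true, sum_const, card_univ,
    Fintype.card_fin, nsmul_eq_mul]
  linarith

lemma sum_transitionWeight_smul {V : Type*} [AddCommGroup V] [Module ℝ V] {e : Fin m → V}
    (he : ∑ b, e b = 0) (x : Fin m) :
    ∑ b, transitionWeight r t x b • e b = (‖r‖ ^ 2 - ‖t‖ ^ 2) • e x := by
  have split : ∀ b, transitionWeight r t x b • e b =
      (if x = b then (‖r‖ ^ 2 - ‖t‖ ^ 2) • e b else 0) + ‖t‖ ^ 2 • e b := by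
    intro b; unfold transitionWeight; split_ifs <;> simp [sub_smul]
  simp only [split, sum_add_distrib, sum_ite_eq, mem_univ, if_true, ← smul_sum, he, smul_zero,
    add_zero]

variable (r t) in
lemma sum_norm_Xi_sq (h1 : ‖r‖ ^ 2 + ((m : ℝ) - 1) * ‖t‖ ^ 2 = 1) (n : ℕ) :
    ∑ a : Fin (n + 1) → Fin m, ‖Xi m (n + 1) r t a‖ ^ 2 = m := by
  induction n with
  | zero => simp [Xi_one]
  | succ n ih =>
    simp only [sum_fin_succ_fun (n := n + 1), norm_Xi_snoc_sq, ← mul_sum, sum_transitionWeight h1,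
      mul_one, ih]

variable {E : Type*} [NormedAddCommGroup E]

variable (r t) in
def dispersionSum (e : Fin m → E) (n : ℕ) : ℝ :=
  ∑ a : Fin n → Fin m, ‖∑ j, e (a j)‖ ^ 2 * ‖Xi m n r t a‖ ^ 2

lemma dispersionSum_one {e : Fin m → E} (he1 : ∀ b, ‖e b‖ = 1) :
    dispersionSum r t e 1 = m := by
  simp [dispersionSum, Xi_one, he1]

variable [InnerProductSpace ℝ E] {e : Fin m → E}

variable (r t) in
/-- `correlationSum r t (eR d) n = Rsum d r t (n + 1)`; the shifted index avoids the empty walk,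
which has no last step. -/
def correlationSum (e : Fin m → E) (n : ℕ) : ℝ :=
  ∑ a : Fin (n + 1) → Fin m, ‖Xi m (n + 1) r t a‖ ^ 2 * ⟪∑ j, e (a j), e (a (Fin.last n))⟫

lemma correlationSum_zero (he1 : ∀ b, ‖e b‖ = 1) : correlationSum r t e 0 = m := by
  simp [correlationSum, Xi_one, he1]

lemma sum_transitionWeight_mul_norm_add_sq (h1 : ‖r‖ ^ 2 + ((m : ℝ) - 1) * ‖t‖ ^ 2 = 1)
    (he : ∑ b, e b = 0) (he1 : ∀ b, ‖e b‖ = 1) (v : E) (x : Fin m) :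
    ∑ b, transitionWeight r t x b * ‖v + e b‖ ^ 2 =
      ‖v‖ ^ 2 + 2 * (‖r‖ ^ 2 - ‖t‖ ^ 2) * ⟪v, e x⟫ + 1 := by
  have hinner : ∑ b, transitionWeight r t x b * ⟪v, e b⟫ = (‖r‖ ^ 2 - ‖t‖ ^ 2) * ⟪v, e x⟫ := by
    simp only [← real_inner_smul_right, ← inner_sum, sum_transitionWeight_smul he]
  simp only [norm_add_sq_real, he1, mul_add, sum_add_distrib, ← sum_mul, mul_left_comm _ (2 : ℝ),
    ← mul_sum, hinner, sum_transitionWeight h1]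
  ring

lemma dispersionSum_succ_succ (h1 : ‖r‖ ^ 2 + ((m : ℝ) - 1) * ‖t‖ ^ 2 = 1)
    (he : ∑ b, e b = 0) (he1 : ∀ b, ‖e b‖ = 1) (n : ℕ) :
    dispersionSum r t e (n + 2) = dispersionSum r t e (n + 1) +
      2 * (‖r‖ ^ 2 - ‖t‖ ^ 2) * correlationSum r t e n + m := by
  have step : ∀ a : Fin (n + 1) → Fin m,
      ∑ b, ‖∑ j, e ((Fin.snoc a b : Fin (n + 2) → Fin m) j)‖ ^ 2 *
        ‖Xi m (n + 2) r t (Fin.snoc a b)‖ ^ 2 =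
      ‖Xi m (n + 1) r t a‖ ^ 2 *
        (‖∑ j, e (a j)‖ ^ 2 + 2 * (‖r‖ ^ 2 - ‖t‖ ^ 2) * ⟪∑ j, e (a j), e (a (Fin.last n))⟫
          + 1) := by
    intro a
    simp only [Fin.sum_univ_castSucc (n := n + 1), Fin.snoc_castSucc, Fin.snoc_last,
      norm_Xi_snoc_sq, ← sum_transitionWeight_mul_norm_add_sq h1 he he1, mul_sum]
    exact sum_congr rfl fun b _ => by ring
  rw [dispersionSum, sum_fin_succ_fun, correlationSum, mul_sum, ← sum_norm_Xi_sq r t h1 n,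
    dispersionSum]
  simp only [step, ← sum_add_distrib]
  exact sum_congr rfl fun a _ => by ring

lemma dispersionSum_of_norm_eq (h1 : ‖r‖ ^ 2 + ((m : ℝ) - 1) * ‖t‖ ^ 2 = 1)
    (he : ∑ b, e b = 0) (he1 : ∀ b, ‖e b‖ = 1) (hrt : ‖r‖ = ‖t‖) (n : ℕ) :
    dispersionSum r t e (n + 1) = (n + 1) * m := by
  induction n with
  | zero => simp [dispersionSum_one he1]
  | succ n ih =>
    rw [dispersionSum_succ_succ h1 he he1, ih, hrt]
    push_cast
    ring

end Walk

lemma norm_eR (d : ℕ) (b : Fin (2 * d)) : ‖eR d b‖ = 1 := by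
  rw [eR, PiLp.norm_single]
  split_ifs <;> norm_num

/-- `e(2k) = u_k` and `e(2k+1) = -u_k` cancel in pairs. -/
lemma sum_eR (d : ℕ) : ∑ b, eR d b = 0 := by
  let pair : Fin d × Fin 2 ≃ Fin (2 * d) := finProdFinEquiv.trans (finCongr (mul_comm d 2))
  have hpair : ∀ k i, ((pair (k, i) : Fin (2 * d)) : ℕ) = i + 2 * k := fun _ _ => rfl
  have heR : ∀ k i,
      eR d (pair (k, i)) = EuclideanSpace.single k (if (i : ℕ) = 0 then 1 else -1) := by
    intro k i
    have hmod : ((i : ℕ) + 2 * k) % 2 = i := by omega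
    simp only [eR, hpair, hmod]
    congr 1
    ext
    simp only
    omega
  rw [← pair.sum_comp, Fintype.sum_prod_type]
  refine sum_eq_zero fun k _ => ?_
  simp [Fin.sum_univ_two, heR, ← PiLp.single_add]

lemma K_eq_inv {d : ℕ} (hd : 1 ≤ d) {r t : ℂ}
    (h1 : ‖r‖ ^ 2 + (((2 * d : ℕ) : ℝ) - 1) * ‖t‖ ^ 2 = 1)
    (h2 : (((2 * d : ℕ) : ℂ) - 2) * ((‖t‖ ^ 2 : ℝ) : ℂ) + conj r * t + r * conj t = 0) :
    K d r t = (((2 * d : ℕ) : ℝ))⁻¹ := by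
  set M : ℝ := ((2 * d : ℕ) : ℝ)
  set s : ℝ := Real.sqrt (2 * d)
  have hs : s ^ 2 = M := by rw [Real.sq_sqrt (by positivity)]; push_cast [M]; rfl
  have hs0 : (s : ℂ) ≠ 0 := by exact_mod_cast (Real.sqrt_pos.2 (by positivity)).ne'
  have hz : (r - t) / (s : ℂ) + s * t = (r + ((M - 1 : ℝ) : ℂ) * t) / s := by
    field_simp
    rw [← Complex.ofReal_pow, hs]
    push_cast
    ring
  -- `h2` is the cross term of `|r + (M - 1) t|²`, which `h1` then reduces to `1`
  have hnum : ‖r + ((M - 1 : ℝ) : ℂ) * t‖ ^ 2 = 1 := by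
    have h1' := congrArg (fun x : ℝ => (x : ℂ)) h1
    suffices ((‖r + ((M - 1 : ℝ) : ℂ) * t‖ ^ 2 : ℝ) : ℂ) = 1 by exact_mod_cast this
    push_cast [M, ← Complex.mul_conj'] at h1' h2 ⊢
    simp only [map_add, map_mul, map_sub, map_natCast, map_ofNat, map_one]
    linear_combination h1' + (2 * (d : ℂ) - 1) * h2
  rw [K, hz, norm_div, div_pow, hnum, Complex.norm_real, Real.norm_eq_abs, sq_abs, hs, one_div]

theorem dispersion_classical_iff (d : ℕ) (hd : 1 ≤ d) (r t : ℂ)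
    (h1 : ‖r‖ ^ 2 + (((2 * d : ℕ) : ℝ) - 1) * ‖t‖ ^ 2 = 1)
    (h2 : (((2 * d : ℕ) : ℂ) - 2) * ((‖t‖ ^ 2 : ℝ) : ℂ) + conj r * t + r * conj t = 0) :
    (∀ n : ℕ, 1 ≤ n → Dsp d r t n = n) ↔ ‖r‖ = ‖t‖ := by
  have hDsp (n : ℕ) : Dsp d r t n = ((2 * d : ℕ) : ℝ)⁻¹ * dispersionSum r t (eR d) n := by
    rw [← K_eq_inv hd h1 h2]; rfl
  have hM : ((2 * d : ℕ) : ℝ) ≠ 0 := by positivity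
  constructor
  · intro h
    have hD2 := h 2 one_le_two
    rw [hDsp, dispersionSum_succ_succ h1 (sum_eR d) (norm_eR d) 0,
      dispersionSum_one (norm_eR d), correlationSum_zero (norm_eR d)] at hD2
    field_simp at hD2
    have hsq : ‖r‖ ^ 2 = ‖t‖ ^ 2 := by push_cast at hD2; linarith
    exact (sq_eq_sq₀ (norm_nonneg r) (norm_nonneg t)).1 hsq
  · rintro hrt (_ | n) hn
    · omega
    rw [hDsp, dispersionSum_of_norm_eq h1 (sum_eR d) (norm_eR d) hrt]
    field_simp
    push_cast
    ring
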